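/- arXiv:1407.6696 — 2 statements merged into one kernel-verified Lean document; each statement's English description precedes it below -/
import Mathlib

section
/- For z, w in the open unit disc of ℂ, one has √((1-|z|²)(1-|w|²)) ≤ |1 - conj(z)·w| ≤ √((1-|z|²)(1-|w|²)) + |z - w|. -/
open ComplexConjugate

theorem Real.sqrt_add_sq_le (x : ℝ) {a : ℝ} (ha : 0 ≤ a) : √(x + a ^ 2) ≤ √x + a := by
  rw [Real.sqrt_le_left (by positivity)]
  have hx : x ≤ √x ^ 2 := by
    rcases le_total 0 x with hx | hx
    · rw [Real.sq_sqrt hx]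
    · rw [Real.sqrt_eq_zero_of_nonpos hx]; linarith
  nlinarith [Real.sqrt_nonneg x]

theorem Complex.normSq_one_sub_conj_mul (z w : ℂ) :
    normSq (1 - conj z * w) = (1 - normSq z) * (1 - normSq w) + normSq (z - w) := by
  apply ofReal_injective
  push_cast
  simp only [← mul_conj, map_sub, map_mul, map_one, conj_conj]
  ring

theorem Complex.norm_one_sub_conj_mul_sq (z w : ℂ) :
    ‖1 - conj z * w‖ ^ 2 = (1 - ‖z‖ ^ 2) * (1 - ‖w‖ ^ 2) + ‖z - w‖ ^ 2 := by
  simp only [Complex.sq_norm, normSq_one_sub_conj_mul]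

theorem stmt_1_general (z w : ℂ) :
    Real.sqrt ((1 - ‖z‖ ^ 2) * (1 - ‖w‖ ^ 2)) ≤
      ‖1 - (starRingEnd ℂ) z * w‖ ∧
    ‖1 - (starRingEnd ℂ) z * w‖ ≤
      Real.sqrt ((1 - ‖z‖ ^ 2) * (1 - ‖w‖ ^ 2)) + ‖z - w‖ := by
  rw [← Real.sqrt_sq (norm_nonneg (1 - conj z * w)), Complex.norm_one_sub_conj_mul_sq]
  exact ⟨Real.sqrt_le_sqrt (le_add_of_nonneg_right (sq_nonneg _)),
    Real.sqrt_add_sq_le _ (norm_nonneg _)⟩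

theorem stmt_1 (z w : ℂ) (hz : ‖z‖ < 1) (hw : ‖w‖ < 1) :
    Real.sqrt ((1 - ‖z‖ ^ 2) * (1 - ‖w‖ ^ 2)) ≤
      ‖1 - (starRingEnd ℂ) z * w‖ ∧
    ‖1 - (starRingEnd ℂ) z * w‖ ≤
      Real.sqrt ((1 - ‖z‖ ^ 2) * (1 - ‖w‖ ^ 2)) + ‖z - w‖ :=
  stmt_1_general z w
end

section
/- For z, w in the open unit disc: 1 + 2|z-w|·(|1 - conj(z)·w| + |z-w|)/((1-|z|²)(1-|w|²)) ≤ (1 + √2·|z-w|/√((1-|z|)(1-|w|)))². -/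
/-!
Write `a = ‖z‖`, `b = ‖w‖`, `d = ‖z - w‖`, `c = ‖1 - z̄ w‖`, `K = (1 + a)(1 + b)` and
`P = (1 - a)(1 - b)`. Since `c² - d² = (1 - a²)(1 - b²) = K P`, expanding the square on the right
reduces the inequality to `c ≤ √2 K √P + (K - 1) d`. Squaring, this follows from `K ≥ 1` and
`(2 - K) d² ≤ P`, and the latter holds because `d ≤ a + b` forces `d ≤ 1` whenever `K ≤ 2`.
-/

open Real

lemma sq_norm_one_sub_conj_mul_sub_sq_norm_sub (z w : ℂ) :
    ‖1 - starRingEnd ℂ z * w‖ ^ 2 - ‖z - w‖ ^ 2 = (1 - ‖z‖ ^ 2) * (1 - ‖w‖ ^ 2) := by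
  simp only [← Complex.normSq_eq_norm_sq, Complex.normSq_apply, Complex.sub_re, Complex.sub_im,
    Complex.mul_re, Complex.mul_im, Complex.conj_re, Complex.conj_im, Complex.one_re,
    Complex.one_im]
  ring

lemma two_sub_mul_sq_le {a b d : ℝ} (ha : 0 ≤ a) (hb : 0 ≤ b) (ha1 : a ≤ 1) (hb1 : b ≤ 1)
    (hd : 0 ≤ d) (hdab : d ≤ a + b) : (2 - (1 + a) * (1 + b)) * d ^ 2 ≤ (1 - a) * (1 - b) := by
  have hab := mul_nonneg ha hb
  rcases le_or_gt ((1 + a) * (1 + b)) 2 with hK | hK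
  · have hd1 : d ^ 2 ≤ 1 := by nlinarith
    nlinarith
  · nlinarith [mul_nonneg (sub_nonneg.2 hK.le) (sq_nonneg d),
      mul_nonneg (sub_nonneg.2 ha1) (sub_nonneg.2 hb1)]

lemma le_sqrt_two_mul_add_of_sq_eq {K P c d : ℝ} (hK : 1 ≤ K) (hP : 0 ≤ P) (hd : 0 ≤ d)
    (hgap : (2 - K) * d ^ 2 ≤ P) (hc : c ^ 2 = K * P + d ^ 2) :
    c ≤ √2 * K * √P + (K - 1) * d := by
  have hcross : 0 ≤ √2 * K * √P * ((K - 1) * d) := by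
    have := sub_nonneg.2 hK
    positivity
  have hrhs : (√2 * K * √P + (K - 1) * d) ^ 2
      = 2 * K ^ 2 * P + 2 * (√2 * K * √P * ((K - 1) * d)) + (K - 1) ^ 2 * d ^ 2 := by
    rw [add_sq, mul_pow, mul_pow, sq_sqrt zero_le_two, sq_sqrt hP]
    ring
  refine abs_le_of_sq_le_sq' ?_ (by positivity) |>.2
  rw [hrhs, hc]
  have hgapK := mul_le_mul_of_nonneg_left hgap (by linarith : 0 ≤ K)
  have hKP := mul_le_mul_of_nonneg_right hK (mul_nonneg (by linarith : 0 ≤ K) hP)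
  nlinarith

lemma one_add_two_mul_div_le_sq_of_sq_sub_sq {a b c d : ℝ} (ha : 0 ≤ a) (hb : 0 ≤ b)
    (ha1 : a < 1) (hb1 : b < 1) (hd : 0 ≤ d) (hdab : d ≤ a + b)
    (hc : c ^ 2 - d ^ 2 = (1 - a ^ 2) * (1 - b ^ 2)) :
    1 + 2 * d * (c + d) / ((1 - a ^ 2) * (1 - b ^ 2)) ≤
      (1 + √2 * d / √((1 - a) * (1 - b))) ^ 2 := by
  set K := (1 + a) * (1 + b)
  set P := (1 - a) * (1 - b)
  have hK : 1 ≤ K := by nlinarith [mul_nonneg ha hb]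
  have hP : 0 < P := mul_pos (by linarith) (by linarith)
  have hKP : (1 - a ^ 2) * (1 - b ^ 2) = K * P := by ring
  have hc' : c ^ 2 = K * P + d ^ 2 := by linarith
  have hcd : c + d ≤ K * (√2 * √P + d) := by
    have := le_sqrt_two_mul_add_of_sq_eq hK hP.le hd
      (two_sub_mul_sq_le ha hb ha1.le hb1.le hd hdab) hc'
    linarith
  rw [hKP]
  calc 1 + 2 * d * (c + d) / (K * P)
      ≤ 1 + 2 * d * (K * (√2 * √P + d)) / (K * P) := by gcongr
    _ = (1 + √2 * d / √P) ^ 2 := by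
      have hS : √P ≠ 0 := (sqrt_pos.2 hP).ne'
      have hP_eq : P = √P ^ 2 := (sq_sqrt hP.le).symm
      set S := √P
      rw [hP_eq]
      field_simp
      linear_combination (-d ^ 2) * sq_sqrt (zero_le_two (α := ℝ))

theorem stmt_8 (z w : ℂ) (hz : ‖z‖ < 1) (hw : ‖w‖ < 1) :
    1 + 2 * ‖z - w‖ *
        (‖1 - (starRingEnd ℂ) z * w‖ + ‖z - w‖) /
        ((1 - ‖z‖ ^ 2) * (1 - ‖w‖ ^ 2)) ≤
      (1 + Real.sqrt 2 * ‖z - w‖ /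
        Real.sqrt ((1 - ‖z‖) * (1 - ‖w‖))) ^ 2 :=
  one_add_two_mul_div_le_sq_of_sq_sub_sq (norm_nonneg z) (norm_nonneg w) hz hw (norm_nonneg _)
    (norm_sub_le z w) (sq_norm_one_sub_conj_mul_sub_sq_norm_sub z w)
end
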